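/- Let I ⊆ ℝ be a nonempty open interval and let (F,f1,f2,G,g1,g2) be a regular solution of equation (1) such that F' is constant on I. Then there exist constants A, B, λ, λ1, λ2 ∈ ℝ such that F(x) = A·x + λ and f_k(x) = -F(x)/2 + B·g_k(x) + λ_k for all x ∈ I and k ∈ {1,2}, and G(u) = B·u + λ1 + λ2 for all u ∈ g1(I)+g2(I). -/

import Mathlib

/-!
Differentiating (1) in `x` and in `y`, with `F' ≡ A`, gives
`A/2 + f1'(x) = G'(g1 x + g2 y) g1'(x)` and `A/2 + f2'(y) = G'(g1 x + g2 y) g2'(y)`.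
As `g1'` and `g2'` do not vanish, `G'(g1 x + g2 y)` depends neither on `y` nor on `x`, so it is
a constant `B`. Then `F - A x` and `f_k - B g_k + A x / 2` have zero derivative on the interval,
and substituting back into (1) determines `G`.
-/

open Set Filter Topology

/-- Equation (1): `F((x+y)/2) + f1(x) + f2(y) = G(g1(x) + g2(y))` for all `x, y ∈ I`. -/
def SolvesEq1 (I : Set ℝ) (F f1 f2 G g1 g2 : ℝ → ℝ) : Prop :=
  ∀ x ∈ I, ∀ y ∈ I, F ((x + y) / 2) + f1 x + f2 y = G (g1 x + g2 y)

theorem Set.OrdConnected.add_div_two_mem {I : Set ℝ} (hI : I.OrdConnected) {x y : ℝ}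
    (hx : x ∈ I) (hy : y ∈ I) : (x + y) / 2 ∈ I := by
  have := hI.convex.midpoint_mem (𝕜 := ℝ) hx hy
  rwa [midpoint_eq_smul_add, invOf_eq_inv, smul_eq_mul, inv_mul_eq_div] at this

theorem IsOpen.exists_eq_add_of_hasDerivAt {I : Set ℝ} (hIo : IsOpen I) (hI : IsPreconnected I)
    {f g f' : ℝ → ℝ} (hf : ∀ x ∈ I, HasDerivAt f (f' x) x)
    (hg : ∀ x ∈ I, HasDerivAt g (f' x) x) :
    ∃ c, ∀ x ∈ I, f x = g x + c :=
  hIo.exists_eq_add_of_deriv_eq hI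
    (fun x hx => (hf x hx).differentiableAt.differentiableWithinAt)
    (fun x hx => (hg x hx).differentiableAt.differentiableWithinAt)
    (fun x hx => (hf x hx).deriv.trans (hg x hx).deriv.symm)

theorem forall_eq_mul_sub_of_forall_add_eq_mul {I : Set ℝ} {p₁ p₂ q₁ q₂ : ℝ → ℝ}
    {φ : ℝ → ℝ → ℝ} {a x₀ : ℝ} (hx₀ : x₀ ∈ I) (hq₁ : q₁ x₀ ≠ 0) (hq₂ : q₂ x₀ ≠ 0)
    (h : ∀ x ∈ I, ∀ y ∈ I, a + p₁ x = φ x y * q₁ x ∧ a + p₂ y = φ x y * q₂ y) :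
    ∀ x ∈ I, p₁ x = φ x₀ x₀ * q₁ x - a ∧ p₂ x = φ x₀ x₀ * q₂ x - a := by
  intro x hx
  have h₁ : φ x x₀ = φ x₀ x₀ :=
    mul_right_cancel₀ hq₂ ((h x hx x₀ hx₀).2.symm.trans (h x₀ hx₀ x₀ hx₀).2)
  have h₂ : φ x₀ x = φ x₀ x₀ :=
    mul_right_cancel₀ hq₁ ((h x₀ hx₀ x hx).1.symm.trans (h x₀ hx₀ x₀ hx₀).1)
  constructor
  · linarith [h₁ ▸ (h x hx x₀ hx₀).1]
  · linarith [h₂ ▸ (h x₀ hx₀ x hx).2]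

namespace SolvesEq1

variable {I S : Set ℝ} {F f1 f2 G g1 g2 : ℝ → ℝ}

theorem swap (hsol : SolvesEq1 I F f1 f2 G g1 g2) : SolvesEq1 I F f2 f1 G g2 g1 :=
  fun x hx y hy => by rw [add_comm x, add_comm (g2 x), add_right_comm, hsol y hy x hx]

theorem hasDerivAt_left_eq (hsol : SolvesEq1 I F f1 f2 G g1 g2) {x y a b c d : ℝ}
    (hS : MapsTo (fun z => g1 z + g2 y) I S) (hI : I ∈ 𝓝 x) (hy : y ∈ I)
    (hF : HasDerivAt F a ((x + y) / 2)) (hf1 : HasDerivAt f1 b x) (hg1 : HasDerivAt g1 c x)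
    (hG : HasDerivWithinAt G d S (g1 x + g2 y)) :
    a / 2 + b = d * c := by
  have hmid : HasDerivAt (fun z => (z + y) / 2) (1 / 2) x :=
    ((hasDerivAt_id x).add_const y).div_const 2
  have hL : HasDerivAt (fun z => F ((z + y) / 2) + f1 z + f2 y) (a * (1 / 2) + b) x :=
    ((hF.comp x hmid).add hf1).add_const (f2 y)
  have hR : HasDerivAt (fun z => G (g1 z + g2 y)) (d * c) x :=
    (hG.comp x (hg1.add_const (g2 y)).hasDerivWithinAt hS).hasDerivAt hI
  have hLR := hL.unique <|
    hR.congr_of_eventuallyEq (eventually_of_mem hI fun z hz => hsol z hz y hy)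
  linarith

theorem hasDerivAt_right_eq (hsol : SolvesEq1 I F f1 f2 G g1 g2) {x y a b c d : ℝ}
    (hS : MapsTo (fun z => g1 x + g2 z) I S) (hI : I ∈ 𝓝 y) (hx : x ∈ I)
    (hF : HasDerivAt F a ((x + y) / 2)) (hf2 : HasDerivAt f2 b y) (hg2 : HasDerivAt g2 c y)
    (hG : HasDerivWithinAt G d S (g1 x + g2 y)) :
    a / 2 + b = d * c :=
  hsol.swap.hasDerivAt_left_eq
    (fun z hz => show g2 z + g1 x ∈ S from add_comm (g1 x) (g2 z) ▸ hS hz) hI hx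
    (add_comm x y ▸ hF) hf2 hg2 (add_comm (g1 x) (g2 y) ▸ hG)

theorem deriv_identities (hsol : SolvesEq1 I F f1 f2 G g1 g2) (hIo : IsOpen I)
    (hIc : I.OrdConnected) {f1' f2' g1' g2' G' : ℝ → ℝ} {A : ℝ}
    (hF : ∀ x ∈ I, HasDerivAt F A x)
    (hf1 : ∀ x ∈ I, HasDerivAt f1 (f1' x) x) (hf2 : ∀ x ∈ I, HasDerivAt f2 (f2' x) x)
    (hg1 : ∀ x ∈ I, HasDerivAt g1 (g1' x) x) (hg2 : ∀ x ∈ I, HasDerivAt g2 (g2' x) x)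
    (hG : ∀ u ∈ S, HasDerivWithinAt G (G' u) S u)
    (hS : ∀ x ∈ I, ∀ y ∈ I, g1 x + g2 y ∈ S) :
    ∀ x ∈ I, ∀ y ∈ I,
      A / 2 + f1' x = G' (g1 x + g2 y) * g1' x ∧ A / 2 + f2' y = G' (g1 x + g2 y) * g2' y := by
  intro x hx y hy
  have hFm := hF _ (hIc.add_div_two_mem hx hy)
  have hGxy := hG _ (hS x hx y hy)
  exact ⟨hsol.hasDerivAt_left_eq (fun z hz => hS z hz y hy) (hIo.mem_nhds hx) hy hFm
      (hf1 x hx) (hg1 x hx) hGxy,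
    hsol.hasDerivAt_right_eq (fun z hz => hS x hx z hz) (hIo.mem_nhds hy) hx hFm
      (hf2 y hy) (hg2 y hy) hGxy⟩

end SolvesEq1

theorem stmt12_general
    (I : Set ℝ) (hIo : IsOpen I) (hIc : I.OrdConnected) (hIne : I.Nonempty)
    (F f1 f2 G g1 g2 F' f1' f2' g1' g2' G' : ℝ → ℝ)
    (hsol : SolvesEq1 I F f1 f2 G g1 g2)
    (hF : ∀ x ∈ I, HasDerivAt F (F' x) x)
    (hf1 : ∀ x ∈ I, HasDerivAt f1 (f1' x) x)
    (hf2 : ∀ x ∈ I, HasDerivAt f2 (f2' x) x)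
    (hg1 : ∀ x ∈ I, HasDerivAt g1 (g1' x) x)
    (hg2 : ∀ x ∈ I, HasDerivAt g2 (g2' x) x)
    (hG : ∀ u ∈ {u : ℝ | ∃ x ∈ I, ∃ y ∈ I, u = g1 x + g2 y},
      HasDerivWithinAt G (G' u) {u : ℝ | ∃ x ∈ I, ∃ y ∈ I, u = g1 x + g2 y} u)
    (hg1'0 : ∀ x ∈ I, g1' x ≠ 0) (hg2'0 : ∀ x ∈ I, g2' x ≠ 0)
    (hF'const : ∀ x ∈ I, ∀ y ∈ I, F' x = F' y) :
    ∃ A B lam lam1 lam2 : ℝ,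
      (∀ x ∈ I, F x = A * x + lam ∧
                f1 x = -F x / 2 + B * g1 x + lam1 ∧
                f2 x = -F x / 2 + B * g2 x + lam2) ∧
      (∀ u : ℝ, (∃ x ∈ I, ∃ y ∈ I, u = g1 x + g2 y) → G u = B * u + lam1 + lam2) := by
  obtain ⟨x₀, hx₀⟩ := hIne
  set A := F' x₀
  set B := G' (g1 x₀ + g2 x₀)
  have hFA : ∀ x ∈ I, HasDerivAt F A x := fun x hx =>
    (hF x hx).congr_deriv (hF'const x hx x₀ hx₀)
  have hf' := forall_eq_mul_sub_of_forall_add_eq_mul hx₀ (hg1'0 x₀ hx₀) (hg2'0 x₀ hx₀)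
    (hsol.deriv_identities hIo hIc hFA hf1 hf2 hg1 hg2 hG fun x hx y hy => ⟨x, hx, y, hy, rfl⟩)
  have hconn := hIc.isPreconnected
  obtain ⟨lam, hlam⟩ := hIo.exists_eq_add_of_hasDerivAt (g := fun x => A * x) hconn hFA
    fun x _ => ((hasDerivAt_id x).const_mul A).congr_deriv (mul_one A)
  obtain ⟨c₁, hc₁⟩ := hIo.exists_eq_add_of_hasDerivAt (g := fun x => B * g1 x - A / 2 * x)
    hconn hf1 fun x hx => (((hg1 x hx).const_mul B).sub
      ((hasDerivAt_id x).const_mul (A / 2))).congr_deriv (by rw [(hf' x hx).1]; ring)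
  obtain ⟨c₂, hc₂⟩ := hIo.exists_eq_add_of_hasDerivAt (g := fun x => B * g2 x - A / 2 * x)
    hconn hf2 fun x hx => (((hg2 x hx).const_mul B).sub
      ((hasDerivAt_id x).const_mul (A / 2))).congr_deriv (by rw [(hf' x hx).2]; ring)
  refine ⟨A, B, lam, c₁ + lam / 2, c₂ + lam / 2, fun x hx => ⟨hlam x hx, ?_, ?_⟩, ?_⟩
  · rw [hc₁ x hx, hlam x hx]; ring
  · rw [hc₂ x hx, hlam x hx]; ring
  · rintro u ⟨x, hx, y, hy, rfl⟩
    rw [← hsol x hx y hy, hlam _ (hIc.add_div_two_mem hx hy), hc₁ x hx, hc₂ y hy]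
    ring

/-- If `(F,f1,f2,G,g1,g2)` is a regular solution of equation (1)
(each function continuously differentiable on its domain, `g1', g2'` nonvanishing on `I`)
such that `F'` is constant on `I`, then there are constants `A, B, λ, λ1, λ2` with
`F(x) = A·x + λ`, `f_k(x) = -F(x)/2 + B·g_k(x) + λ_k` on `I`, and `G(u) = B·u + λ1 + λ2`
on `g1(I) + g2(I)`. -/
theorem stmt12
    (I : Set ℝ) (hIo : IsOpen I) (hIc : I.OrdConnected) (hIne : I.Nonempty)
    (F f1 f2 G g1 g2 F' f1' f2' g1' g2' G' : ℝ → ℝ)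
    (hsol : SolvesEq1 I F f1 f2 G g1 g2)
    (hF : ∀ x ∈ I, HasDerivAt F (F' x) x)
    (hf1 : ∀ x ∈ I, HasDerivAt f1 (f1' x) x)
    (hf2 : ∀ x ∈ I, HasDerivAt f2 (f2' x) x)
    (hg1 : ∀ x ∈ I, HasDerivAt g1 (g1' x) x)
    (hg2 : ∀ x ∈ I, HasDerivAt g2 (g2' x) x)
    (hG : ∀ u ∈ {u : ℝ | ∃ x ∈ I, ∃ y ∈ I, u = g1 x + g2 y},
      HasDerivWithinAt G (G' u) {u : ℝ | ∃ x ∈ I, ∃ y ∈ I, u = g1 x + g2 y} u)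
    (hF'c : ContinuousOn F' I) (hf1'c : ContinuousOn f1' I) (hf2'c : ContinuousOn f2' I)
    (hg1'c : ContinuousOn g1' I) (hg2'c : ContinuousOn g2' I)
    (hG'c : ContinuousOn G' {u : ℝ | ∃ x ∈ I, ∃ y ∈ I, u = g1 x + g2 y})
    (hg1'0 : ∀ x ∈ I, g1' x ≠ 0) (hg2'0 : ∀ x ∈ I, g2' x ≠ 0)
    (hF'const : ∀ x ∈ I, ∀ y ∈ I, F' x = F' y) :
    ∃ A B lam lam1 lam2 : ℝ,
      (∀ x ∈ I, F x = A * x + lam ∧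
                f1 x = -F x / 2 + B * g1 x + lam1 ∧
                f2 x = -F x / 2 + B * g2 x + lam2) ∧
      (∀ u : ℝ, (∃ x ∈ I, ∃ y ∈ I, u = g1 x + g2 y) → G u = B * u + lam1 + lam2) :=
  stmt12_general I hIo hIc hIne F f1 f2 G g1 g2 F' f1' f2' g1' g2' G' hsol hF hf1 hf2 hg1 hg2 hG
    hg1'0 hg2'0 hF'const
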